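/- arXiv:0903.2708 — 6 statements merged into one kernel-verified Lean document; each statement's English description precedes it below -/
import Mathlib

section
/- Let γ be a real number and z a bounded normal operator on a Hilbert space H such that z − z* = 2γi z*z and ker z = {0}. Then the (generally unbounded) operator A := z⁻¹ + iγ·I, defined on the range of z, is self-adjoint. -/
/-!
Normality turns the relation into `z* = z (1 - 2γi z*)`, so `ran z* ⊆ ran z`, and it also gives
`ker z* = ker z = 0`, so the domain `ran z` of `A` is dense. Read as
`⟪ψ, zφ⟫ - ⟪zψ, φ⟫ = 2γi ⟪zψ, zφ⟫`, the relation says exactly that `A` is symmetric.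
Finally, if `y ∈ dom A*`, testing `A* y` against `z ψ` gives `y = z* (A* y + iγ y) ∈ ran z* ⊆ ran z`,
so `dom A* ⊆ dom A` and the symmetric operator `A` is self-adjoint.
-/

open scoped InnerProductSpace LinearPMap

namespace LinearPMap

variable {𝕜 E : Type*} [RCLike 𝕜] [NormedAddCommGroup E] [InnerProductSpace 𝕜 E] [CompleteSpace E]

theorem isSelfAdjoint_of_isFormalAdjoint_of_adjoint_domain_le {T : E →ₗ.[𝕜] E}
    (hT : Dense (T.domain : Set E)) (hsymm : T.IsFormalAdjoint T) (hdom : T†.domain ≤ T.domain) :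
    IsSelfAdjoint T :=
  have hle := hsymm.le_adjoint hT
  (eq_of_le_of_domain_eq hle (le_antisymm hle.1 hdom)).symm

end LinearPMap

theorem star_eq_mul_one_sub_smul_star {S R : Type*} [CommSemiring S] [Ring R] [Star R]
    [Algebra S R] {a : R} (ha : IsStarNormal a) {c : S} (hrel : a - star a = c • (star a * a)) :
    star a = a * (1 - c • star a) := by
  rw [mul_sub, mul_one, mul_smul_comm, ← ha.star_comm_self.eq, ← hrel, sub_sub_cancel]

namespace ContinuousLinearMap

variable {𝕜 E : Type*} [RCLike 𝕜] [NormedAddCommGroup E] [InnerProductSpace 𝕜 E] [CompleteSpace E]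

theorem IsStarNormal.dense_range_of_ker_eq_bot {T : E →L[𝕜] E} (hT : IsStarNormal T)
    (hker : T.ker = ⊥) : Dense (T.range : Set E) := by
  rw [Submodule.dense_iff_topologicalClosure_eq_top, Submodule.topologicalClosure_eq_top_iff,
    IsStarNormal.orthogonal_range hT, hker]

theorem range_star_le_range_of_sub_star_eq_smul {T : E →L[𝕜] E} (hT : IsStarNormal T) {c : 𝕜}
    (hrel : T - star T = c • (star T * T)) : (star T).range ≤ T.range := by
  rintro _ ⟨v, rfl⟩
  exact ⟨(1 - c • star T) v, (DFunLike.congr_fun (star_eq_mul_one_sub_smul_star hT hrel) v).symm⟩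

theorem inner_sub_inner_eq_of_sub_star_eq_smul {T : E →L[𝕜] E} {c : 𝕜}
    (hrel : T - star T = c • (star T * T)) (x y : E) :
    ⟪x, T y⟫_𝕜 - ⟪T x, y⟫_𝕜 = c * ⟪T x, T y⟫_𝕜 := by
  have h := congrArg (fun S : E →L[𝕜] E => ⟪x, S y⟫_𝕜) hrel
  simpa only [sub_apply, smul_apply, mul_def, comp_apply, inner_sub_right, inner_smul_right,
    star_eq_adjoint, adjoint_inner_left, adjoint_inner_right] using h

end ContinuousLinearMap

section InverseShift

open ContinuousLinearMap

variable {H : Type*} [NormedAddCommGroup H] [InnerProductSpace ℂ H] [CompleteSpace H]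
  {γ : ℝ} {z : H →L[ℂ] H} {A : H →ₗ.[ℂ] H}

theorem isFormalAdjoint_self_of_apply_eq
    (hrel : z - star z = (2 * (γ : ℂ) * Complex.I) • (star z * z)) (hdom : A.domain = z.range)
    (hA : ∀ (ψ : H) (h : z ψ ∈ A.domain), A ⟨z ψ, h⟩ = ψ + (Complex.I * (γ : ℂ)) • z ψ) :
    A.IsFormalAdjoint A := by
  have hval : ∀ x : A.domain, ∃ ψ, (x : H) = z ψ ∧ A x = ψ + (Complex.I * (γ : ℂ)) • z ψ := by
    rintro ⟨x, hx⟩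
    obtain ⟨ψ, rfl⟩ := hdom ▸ hx
    exact ⟨ψ, rfl, hA ψ hx⟩
  intro x y
  obtain ⟨ψ, hx, hAx⟩ := hval x
  obtain ⟨φ, hy, hAy⟩ := hval y
  rw [hAx, hAy, hx, hy]
  simp only [inner_add_left, inner_add_right, inner_smul_left, inner_smul_right, map_mul,
    Complex.conj_I, Complex.conj_ofReal]
  linear_combination inner_sub_inner_eq_of_sub_star_eq_smul hrel ψ φ

theorem adjoint_domain_le_range_star (hdense : Dense (A.domain : Set H))
    (hmem : ∀ ψ : H, z ψ ∈ A.domain)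
    (hA : ∀ (ψ : H) (h : z ψ ∈ A.domain), A ⟨z ψ, h⟩ = ψ + (Complex.I * (γ : ℂ)) • z ψ) :
    A†.domain ≤ (star z).range := by
  intro y hy
  refine ⟨A† ⟨y, hy⟩ + (Complex.I * (γ : ℂ)) • y, ext_inner_right ℂ fun ψ => ?_⟩
  have h := LinearPMap.adjoint_isFormalAdjoint hdense ⟨y, hy⟩ ⟨z ψ, hmem ψ⟩
  rw [hA ψ (hmem ψ)] at h
  simp only [inner_add_right, inner_smul_right] at h
  rw [coe_coe, star_eq_adjoint, adjoint_inner_left]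
  simp only [inner_add_left, inner_smul_left, map_mul, Complex.conj_I, Complex.conj_ofReal]
  linear_combination h

end InverseShift

/-- Let `γ ∈ ℝ` and `z` a bounded normal operator on a Hilbert space with
`z - z* = 2γi z*z` and trivial kernel.  Then the operator `A := z⁻¹ + iγ·I`,
defined on the range of `z` (i.e. the unbounded operator sending `z ψ` to
`ψ + iγ·(z ψ)`), is self-adjoint. -/
theorem stmt_1 {H : Type*} [NormedAddCommGroup H] [InnerProductSpace ℂ H] [CompleteSpace H]
    (γ : ℝ) (z : H →L[ℂ] H) (hnormal : IsStarNormal z)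
    (hrel : z - star z = (2 * (γ : ℂ) * Complex.I) • (star z * z))
    (hker : LinearMap.ker (z : H →ₗ[ℂ] H) = ⊥)
    (A : H →ₗ.[ℂ] H)
    (hdom : A.domain = LinearMap.range (z : H →ₗ[ℂ] H))
    (hA : ∀ (ψ : H) (h : z ψ ∈ A.domain), A ⟨z ψ, h⟩ = ψ + (Complex.I * (γ : ℂ)) • z ψ) :
    IsSelfAdjoint A := by
  have hmem : ∀ ψ : H, z ψ ∈ A.domain := fun ψ => hdom ▸ LinearMap.mem_range_self _ ψ
  have hdense : Dense (A.domain : Set H) :=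
    hdom ▸ ContinuousLinearMap.IsStarNormal.dense_range_of_ker_eq_bot hnormal hker
  refine LinearPMap.isSelfAdjoint_of_isFormalAdjoint_of_adjoint_domain_le hdense
    (isFormalAdjoint_self_of_apply_eq hrel hdom hA) ?_
  calc A†.domain ≤ (star z).range := adjoint_domain_le_range_star hdense hmem hA
    _ ≤ z.range := ContinuousLinearMap.range_star_le_range_of_sub_star_eq_smul hnormal hrel
    _ = A.domain := hdom.symm
end

section
/- Let x₀, x₁, y be bounded operators on a Hilbert space satisfying x₀x₁ = x₁x₀ and x₀y − yx₁ = −β y x₁ x₀ y = −β x₀ y² x₁ for a real β. Then for every n ≥ 1, x₀ⁿ y = y x₁ⁿ + βi · y (x₁ⁿ − x₀ⁿ) y, provided additionally x₀ − x₁ = −i x₁x₀ = −i x₀x₁. -/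
/-!
Put `c = βi` and `w = 1 + c y`. The relation `x₀ⁿ y = y x₁ⁿ + c y (x₁ⁿ - x₀ⁿ) y` says exactly
`w x₀ⁿ y = y x₁ⁿ w`. For `n = 1` this is the hypothesis on `x₀ y - y x₁`, once `x₁ x₀` is replaced
by `i (x₁ - x₀)`; the induction step only uses `w - 1 = c y`.
-/

section IntertwiningPowers

variable {R A : Type*} [CommSemiring R] [Ring A] [Algebra R A]

theorem one_add_smul_mul_mul_eq_iff (c : R) (a b u : A) :
    (1 + c • u) * a * u = u * b * (1 + c • u) ↔ a * u = u * b + c • (u * (b - a) * u) := by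
  have key : (1 + c • u) * a * u - u * b * (1 + c • u) = a * u - (u * b + c • (u * (b - a) * u)) := by
    simp only [add_mul, mul_add, one_mul, mul_one, mul_sub, sub_mul, smul_mul_assoc, mul_smul_comm,
      smul_sub]
    abel
  rw [← sub_eq_zero, key, sub_eq_zero]

theorem one_add_smul_mul_pow_mul (c : R) {a b u : A}
    (h : (1 + c • u) * a * u = u * b * (1 + c • u)) (n : ℕ) :
    (1 + c • u) * a ^ n * u = u * b ^ n * (1 + c • u) := by
  set w := 1 + c • u with hw
  induction n with
  | zero => simp [hw, mul_add, add_mul]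
  | succ n ih =>
    have hau : a * u = u * b * w - c • (u * (a * u)) := by
      rw [← h, hw]
      simp only [add_mul, one_mul, smul_mul_assoc, mul_assoc]
      abel
    calc w * a ^ (n + 1) * u
        = (w * a ^ n * u) * b * w - c • ((w * a ^ n * u) * (a * u)) := by
          conv_lhs => rw [pow_succ, ← mul_assoc w, mul_assoc (w * a ^ n), hau]
          simp only [mul_sub, mul_smul_comm, mul_assoc]
      _ = u * b ^ n * (w - c • u) * b * w := by
          rw [ih, mul_assoc (u * b ^ n) w (a * u), ← mul_assoc w, h]
          simp only [mul_sub, sub_mul, mul_smul_comm, smul_mul_assoc, mul_assoc]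
      _ = u * b ^ (n + 1) * w := by
          rw [hw, add_sub_cancel_right, mul_one, pow_succ, mul_assoc u]

end IntertwiningPowers

theorem stmt_8_general {H : Type*} [NormedAddCommGroup H] [InnerProductSpace ℂ H]
    (β : ℝ) (x₀ x₁ y : H →L[ℂ] H)
    (hdiff₁ : x₀ - x₁ = -Complex.I • (x₁ * x₀))
    (hrel₁ : x₀ * y - y * x₁ = -(β : ℂ) • (y * x₁ * x₀ * y)) :
    ∀ n : ℕ, 1 ≤ n →
      x₀ ^ n * y = y * x₁ ^ n + ((β : ℂ) * Complex.I) • (y * (x₁ ^ n - x₀ ^ n) * y) := by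
  intro n _
  have hsub : x₁ - x₀ = Complex.I • (x₁ * x₀) := by
    rw [← neg_sub, hdiff₁, neg_smul, neg_neg]
  have base : x₀ * y = y * x₁ + ((β : ℂ) * Complex.I) • (y * (x₁ - x₀) * y) := by
    rw [hsub, mul_smul_comm, smul_mul_assoc, smul_smul, mul_assoc (β : ℂ), Complex.I_mul_I,
      mul_neg_one, ← mul_assoc y x₁ x₀, ← hrel₁]
    abel
  rw [← one_add_smul_mul_mul_eq_iff] at base ⊢
  exact one_add_smul_mul_pow_mul _ base n

/-- Let `x₀, x₁, y` be bounded operators on a Hilbert space with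
`x₀ - x₁ = -i x₁x₀ = -i x₀x₁` (in particular `x₀x₁ = x₁x₀`) and
`x₀y - yx₁ = -β y x₁ x₀ y = -β x₀ y² x₁` for a real `β`.  Then for every `n ≥ 1`,
`x₀ⁿ y = y x₁ⁿ + βi · y (x₁ⁿ - x₀ⁿ) y`. -/
theorem stmt_8 {H : Type*} [NormedAddCommGroup H] [InnerProductSpace ℂ H] [CompleteSpace H]
    (β : ℝ) (x₀ x₁ y : H →L[ℂ] H)
    (hcomm : x₀ * x₁ = x₁ * x₀)
    (hdiff₁ : x₀ - x₁ = -Complex.I • (x₁ * x₀))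
    (hdiff₂ : x₀ - x₁ = -Complex.I • (x₀ * x₁))
    (hrel₁ : x₀ * y - y * x₁ = -(β : ℂ) • (y * x₁ * x₀ * y))
    (hrel₂ : x₀ * y - y * x₁ = -(β : ℂ) • (x₀ * y ^ 2 * x₁)) :
    ∀ n : ℕ, 1 ≤ n →
      x₀ ^ n * y = y * x₁ ^ n + ((β : ℂ) * Complex.I) • (y * (x₁ ^ n - x₀ ^ n) * y) :=
  stmt_8_general β x₀ x₁ y hdiff₁ hrel₁
end

section
/- Let α, β be nonzero reals with |α| > 1, let x₀ and y be bounded operators on a Hilbert space with ‖x₀‖ ≤ |α|⁻¹, ‖y‖ ≤ |β|⁻¹, satisfying x₀y − yx₁ = −β x₀ y² x₁ for a bounded operator x₁. Then ‖β x₀ y‖ < 1, I − β x₀ y is invertible with inverse Σ_{n≥0} βⁿ (x₀y)ⁿ, and y x₁ = Σ_{n≥0} βⁿ (x₀y)^{n+1}; consequently (x₀y)(yx₁) = (yx₁)(x₀y). -/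
/-!
Since `‖β x₀ y‖ ≤ |β| ‖x₀‖ ‖y‖ ≤ |α|⁻¹ < 1`, the Neumann series `Σ (β x₀ y)ⁿ` inverts
`1 - β x₀ y`. The relation says `x₀ y = (1 - β x₀ y) (y x₁)`, so `y x₁ = (Σ (β x₀ y)ⁿ) x₀ y` is a
norm-convergent power series in `x₀ y`, and therefore commutes with `x₀ y`.
-/

theorem norm_smul_mul_le_of_le_inv {𝕜 R : Type*} [NormedField 𝕜] [NormedRing R]
    [NormedSpace 𝕜 R] (c : 𝕜) {a b : R} {r : ℝ} (ha : ‖a‖ ≤ r) (hb : ‖b‖ ≤ ‖c‖⁻¹) :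
    ‖c • (a * b)‖ ≤ r := by
  have hcb : ‖c‖ * ‖b‖ ≤ 1 :=
    (mul_le_mul_of_nonneg_left hb (norm_nonneg c)).trans mul_inv_le_one
  calc ‖c • (a * b)‖ ≤ ‖c‖ * (‖a‖ * ‖b‖) :=
        (norm_smul_le c _).trans (mul_le_mul_of_nonneg_left (norm_mul_le a b) (norm_nonneg c))
    _ = ‖a‖ * (‖c‖ * ‖b‖) := by ring
    _ ≤ ‖a‖ * 1 := mul_le_mul_of_nonneg_left hcb (norm_nonneg a)
    _ ≤ r := by rwa [mul_one]

theorem mul_eq_one_sub_smul_mul_mul_of_sub_eq {𝕜 R : Type*} [CommRing 𝕜] [Ring R] [Algebra 𝕜 R]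
    (c : 𝕜) {x₀ x₁ y : R} (h : x₀ * y - y * x₁ = -c • (x₀ * y ^ 2 * x₁)) :
    x₀ * y = (1 - c • (x₀ * y)) * (y * x₁) := by
  have hsq : x₀ * y ^ 2 * x₁ = x₀ * y * (y * x₁) := by noncomm_ring
  rw [hsq, neg_smul, sub_eq_iff_eq_add] at h
  rw [sub_mul, one_mul, smul_mul_assoc, sub_eq_neg_add]
  exact h

section NeumannSeries

variable {R : Type*} [NormedRing R] [HasSummableGeomSeries R]

theorem eq_tsum_geom_mul_of_eq_one_sub_mul {t a b : R} (ht : ‖t‖ < 1) (h : a = (1 - t) * b) :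
    b = (∑' n : ℕ, t ^ n) * a := by
  rw [h, ← mul_assoc, geom_series_mul_neg t ht, one_mul]

variable {𝕜 : Type*} [NormedField 𝕜] [NormedAlgebra 𝕜 R]

theorem tsum_smul_pow_mul_self {c : 𝕜} {a : R} (h : ‖c • a‖ < 1) :
    (∑' n : ℕ, (c • a) ^ n) * a = ∑' n : ℕ, c ^ n • a ^ (n + 1) := by
  rw [← (summable_geometric_of_norm_lt_one h).tsum_mul_right]
  refine tsum_congr fun n => ?_
  rw [smul_pow, smul_mul_assoc, pow_succ]

end NeumannSeries

theorem commute_self_tsum_smul_pow_succ {𝕜 R : Type*} [CommSemiring 𝕜] [Semiring R]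
    [Algebra 𝕜 R] [TopologicalSpace R] [IsTopologicalSemiring R] [T2Space R] (c : 𝕜) (a : R) :
    Commute a (∑' n : ℕ, c ^ n • a ^ (n + 1)) :=
  Commute.tsum_right a fun _ => ((Commute.refl a).pow_right _).smul_right _

theorem stmt_9_general {H : Type*} [NormedAddCommGroup H] [InnerProductSpace ℂ H] [CompleteSpace H]
    (α β : ℝ) (hα : 1 < |α|)
    (x₀ x₁ y : H →L[ℂ] H)
    (hx₀ : ‖x₀‖ ≤ |α|⁻¹) (hy : ‖y‖ ≤ |β|⁻¹)
    (hrel : x₀ * y - y * x₁ = -(β : ℂ) • (x₀ * y ^ 2 * x₁)) :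
    ‖(β : ℂ) • (x₀ * y)‖ < 1 ∧
    (1 - (β : ℂ) • (x₀ * y)) * (∑' n : ℕ, ((β : ℂ) • (x₀ * y)) ^ n) = 1 ∧
    (∑' n : ℕ, ((β : ℂ) • (x₀ * y)) ^ n) * (1 - (β : ℂ) • (x₀ * y)) = 1 ∧
    y * x₁ = ∑' n : ℕ, ((β : ℂ) ^ n) • (x₀ * y) ^ (n + 1) ∧
    (x₀ * y) * (y * x₁) = (y * x₁) * (x₀ * y) := by
  have hβ : ‖(β : ℂ)‖ = |β| := by rw [Complex.norm_real, Real.norm_eq_abs]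
  have hnorm : ‖(β : ℂ) • (x₀ * y)‖ < 1 :=
    (norm_smul_mul_le_of_le_inv _ hx₀ (hβ ▸ hy)).trans_lt (inv_lt_one_of_one_lt₀ hα)
  have hyx : y * x₁ = ∑' n : ℕ, ((β : ℂ) ^ n) • (x₀ * y) ^ (n + 1) :=
    (eq_tsum_geom_mul_of_eq_one_sub_mul hnorm
      (mul_eq_one_sub_smul_mul_mul_of_sub_eq _ hrel)).trans (tsum_smul_pow_mul_self hnorm)
  refine ⟨hnorm, mul_neg_geom_series _ hnorm, geom_series_mul_neg _ hnorm, hyx, ?_⟩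
  rw [hyx]
  exact (commute_self_tsum_smul_pow_succ _ _).eq

/-- Let `α, β` be nonzero reals with `|α| > 1` and let `x₀, x₁, y` be bounded operators
with `‖x₀‖ ≤ |α|⁻¹`, `‖y‖ ≤ |β|⁻¹` and `x₀y - yx₁ = -β x₀ y² x₁`.  Then `‖β x₀ y‖ < 1`,
`1 - β x₀ y` is invertible with inverse the Neumann series `Σ βⁿ (x₀y)ⁿ`,
`y x₁ = Σ βⁿ (x₀y)^{n+1}`, and consequently `(x₀y)(yx₁) = (yx₁)(x₀y)`. -/
theorem stmt_9 {H : Type*} [NormedAddCommGroup H] [InnerProductSpace ℂ H] [CompleteSpace H]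
    (α β : ℝ) (hα : 1 < |α|) (hβ : β ≠ 0)
    (x₀ x₁ y : H →L[ℂ] H)
    (hx₀ : ‖x₀‖ ≤ |α|⁻¹) (hy : ‖y‖ ≤ |β|⁻¹)
    (hrel : x₀ * y - y * x₁ = -(β : ℂ) • (x₀ * y ^ 2 * x₁)) :
    ‖(β : ℂ) • (x₀ * y)‖ < 1 ∧
    (1 - (β : ℂ) • (x₀ * y)) * (∑' n : ℕ, ((β : ℂ) • (x₀ * y)) ^ n) = 1 ∧
    (∑' n : ℕ, ((β : ℂ) • (x₀ * y)) ^ n) * (1 - (β : ℂ) • (x₀ * y)) = 1 ∧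
    y * x₁ = ∑' n : ℕ, ((β : ℂ) ^ n) • (x₀ * y) ^ (n + 1) ∧
    (x₀ * y) * (y * x₁) = (y * x₁) * (x₀ * y) :=
  stmt_9_general α β hα x₀ x₁ y hx₀ hy hrel
end

section
/- Let B be a unital *-algebra and let B_b be the set of all b ∈ B for which there exists λ > 0 with λ·1 − b*b ∈ ΣB² (the cone of finite sums of hermitian squares). Then B_b is a unital *-subalgebra of B. -/
/-!
`ΣB²` is stable under conjugation `s ↦ star d * s * d` and under nonnegative real scaling, so
each closure property reduces to an identity in `B`:
`2(λ + μ) - star (a + b) * (a + b)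
  = 2(λ - star a * a) + 2(μ - star b * b) + star (a - b) * (a - b)`,
`λμ - star (a * b) * (a * b) = star b * (λ - star a * a) * b + λ(μ - star b * b)`, and, for the
involution, `λ(λ - b * star b) = b * (λ - star b * b) * star b + (λ - b * star b)²`
(as `λ - b * star b` is self-adjoint), which is then divided by `λ > 0`.
-/

section SumHermSq

variable (B : Type*) [Semiring B] [StarRing B]

def sumHermSq : AddSubmonoid B :=
  AddSubmonoid.closure {x : B | ∃ c : B, x = star c * c}

variable {B}

theorem star_mul_self_mem_sumHermSq (c : B) : star c * c ∈ sumHermSq B :=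
  AddSubmonoid.subset_closure ⟨c, rfl⟩

theorem star_mul_mul_mem_sumHermSq {x : B} (hx : x ∈ sumHermSq B) (d : B) :
    star d * x * d ∈ sumHermSq B := by
  let conj : B →+ B := (AddMonoidHom.mulRight d).comp (AddMonoidHom.mulLeft (star d))
  refine (AddSubmonoid.closure_le (S := (sumHermSq B).comap conj)).2 ?_ hx
  rintro _ ⟨c, rfl⟩
  simpa [conj, mul_assoc] using star_mul_self_mem_sumHermSq (c * d)

end SumHermSq

section Bounded

variable {B : Type*} [Ring B] [StarRing B] [Algebra ℂ B] [StarModule ℂ B]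

theorem ofReal_smul_mem_sumHermSq {r : ℝ} (hr : 0 ≤ r) {x : B} (hx : x ∈ sumHermSq B) :
    (r : ℂ) • x ∈ sumHermSq B := by
  refine (AddSubmonoid.closure_le
    (S := (sumHermSq B).comap (DistribSMul.toAddMonoidHom B (r : ℂ)))).2 ?_ hx
  rintro _ ⟨c, rfl⟩
  have hsqrt : (r : ℂ) = star (√r : ℂ) * (√r : ℂ) := by
    rw [Complex.star_def, Complex.conj_ofReal, ← Complex.ofReal_mul, Real.mul_self_sqrt hr]
  have := star_mul_self_mem_sumHermSq ((√r : ℂ) • c)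
  rwa [star_smul, smul_mul_smul_comm, ← hsqrt] at this

def IsSquareBounded (b : B) : Prop :=
  ∃ lam : ℝ, 0 < lam ∧ (lam : ℂ) • (1 : B) - star b * b ∈ sumHermSq B

theorem isSquareBounded_algebraMap (z : ℂ) : IsSquareBounded (algebraMap ℂ B z) := by
  refine ⟨Complex.normSq z + 1,
    add_pos_of_nonneg_of_pos (Complex.normSq_nonneg z) one_pos, ?_⟩
  have h : ((Complex.normSq z + 1 : ℝ) : ℂ) • (1 : B)
      - star (algebraMap ℂ B z) * algebraMap ℂ B z = star (1 : B) * 1 := by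
    rw [Algebra.algebraMap_eq_smul_one, star_smul, smul_mul_smul_comm, Complex.star_def,
      mul_comm, Complex.mul_conj]
    push_cast
    simp [add_smul]
  exact h ▸ star_mul_self_mem_sumHermSq 1

protected theorem IsSquareBounded.star {b : B} (hb : IsSquareBounded b) :
    IsSquareBounded (star b) := by
  obtain ⟨lam, hlam, hmem⟩ := hb
  refine ⟨lam, hlam, ?_⟩
  rw [star_star]
  set e : B := (lam : ℂ) • (1 : B) - b * star b
  have he : star e = e := by simp [e, star_smul]
  have key :
      (lam : ℂ) • e = b * ((lam : ℂ) • (1 : B) - star b * b) * star b + star e * e := by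
    simp only [he, e, smul_sub, mul_sub, sub_mul, smul_mul_assoc, mul_smul_comm,
      smul_smul, mul_one, one_mul, mul_assoc]
    abel
  have hscaled : (lam : ℂ) • e ∈ sumHermSq B := by
    rw [key]
    exact add_mem (by simpa using star_mul_mul_mem_sumHermSq hmem (star b))
      (star_mul_self_mem_sumHermSq e)
  have := ofReal_smul_mem_sumHermSq (inv_nonneg.mpr hlam.le) hscaled
  rwa [smul_smul, ← Complex.ofReal_mul, inv_mul_cancel₀ hlam.ne', Complex.ofReal_one,
    one_smul] at this

omit [StarModule ℂ B] in
protected theorem IsSquareBounded.add {a b : B} (ha : IsSquareBounded a) (hb : IsSquareBounded b) :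
    IsSquareBounded (a + b) := by
  obtain ⟨la, hla, hma⟩ := ha
  obtain ⟨lb, hlb, hmb⟩ := hb
  refine ⟨2 * (la + lb), by positivity, ?_⟩
  have key : ((2 * (la + lb) : ℝ) : ℂ) • (1 : B) - star (a + b) * (a + b)
      = ((la : ℂ) • (1 : B) - star a * a) + ((la : ℂ) • (1 : B) - star a * a)
        + ((lb : ℂ) • (1 : B) - star b * b) + ((lb : ℂ) • (1 : B) - star b * b)
        + star (a - b) * (a - b) := by
    push_cast
    simp only [star_add, star_sub, add_mul, mul_add, sub_mul, mul_sub, add_smul, mul_smul,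
      two_smul]
    abel
  rw [key]
  exact add_mem (add_mem (add_mem (add_mem hma hma) hmb) hmb) (star_mul_self_mem_sumHermSq _)

protected theorem IsSquareBounded.mul {a b : B} (ha : IsSquareBounded a) (hb : IsSquareBounded b) :
    IsSquareBounded (a * b) := by
  obtain ⟨la, hla, hma⟩ := ha
  obtain ⟨lb, hlb, hmb⟩ := hb
  refine ⟨la * lb, by positivity, ?_⟩
  have key : ((la * lb : ℝ) : ℂ) • (1 : B) - star (a * b) * (a * b)
      = star b * ((la : ℂ) • (1 : B) - star a * a) * b
        + (la : ℂ) • ((lb : ℂ) • (1 : B) - star b * b) := by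
    push_cast
    simp only [star_mul, mul_sub, sub_mul, smul_sub, smul_mul_assoc, mul_smul_comm,
      smul_smul, mul_one, mul_assoc]
    abel
  rw [key]
  exact add_mem (star_mul_mul_mem_sumHermSq hma b) (ofReal_smul_mem_sumHermSq hla.le hmb)

variable (B) in
def boundedStarSubalgebra : StarSubalgebra ℂ B where
  carrier := {b | IsSquareBounded b}
  mul_mem' := IsSquareBounded.mul
  add_mem' := IsSquareBounded.add
  algebraMap_mem' := isSquareBounded_algebraMap
  star_mem' := IsSquareBounded.star

end Bounded

/-- Vidav: in a unital `*`-algebra `B`, the set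
`B_b = {b | ∃ λ > 0, λ·1 - b*b ∈ ΣB²}` of bounded elements is a unital
`*`-subalgebra of `B`. -/
theorem stmt_11 {B : Type*} [Ring B] [StarRing B] [Algebra ℂ B] [StarModule ℂ B] :
    ∃ S : StarSubalgebra ℂ B, (S : Set B) =
      {b : B | ∃ lam : ℝ, 0 < lam ∧
        (lam : ℂ) • (1 : B) - star b * b ∈
          AddSubmonoid.closure {x : B | ∃ c : B, x = star c * c}} :=
  ⟨boundedStarSubalgebra B, rfl⟩
end

section
/- Let A, B be self-adjoint operators on a Hilbert space H, α < −1 and β ≠ 0 reals, x₀ = (A − αi)⁻¹, x₁ = (A − (α+1)i)⁻¹, y = (B − βi)⁻¹. Suppose D ⊆ dom(AB) ∩ dom(BA) satisfies ABφ − BAφ = iBφ for φ ∈ D, and that D₁ := (B − βi)(A − αi)D is dense in H. Then the bounded-operator relation x₀y = y x₁ − β y x₀ x₁ y holds on all of H. -/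
/-- `r` is the (bounded, everywhere defined) resolvent `(c•A - μ)⁻¹` of the
(possibly unbounded) operator `A`. -/
def IsResolventOf {H : Type*} [NormedAddCommGroup H] [InnerProductSpace ℂ H]
    (A : H →ₗ.[ℂ] H) (c μ : ℂ) (r : H →L[ℂ] H) : Prop :=
  (∀ ψ : H, ∃ h : r ψ ∈ A.domain, c • A ⟨r ψ, h⟩ - μ • r ψ = ψ) ∧
  ∀ φ : A.domain, r (c • A φ - μ • (φ : H)) = (φ : H)

/-!
Write `χ = (B - βi)ψ` with `ψ = (A - αi)φ`, `φ ∈ D`. The commutation relation lets one move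
`B - βi` past `A - αi` at the cost of shifting `α` to `α + 1`:
`(B - βi)(A - αi)φ = (A - (α+1)i)(B - βi)φ + βφ`. Applying resolvents to both sides, and using the
resolvent identity for `x₀, x₁` to get `x₀ x₁ ψ = x₁ φ`, both sides of the claimed identity send
`χ` to `φ`. Both sides are bounded, so they agree on the dense set of such `χ`, hence everywhere.
-/

open Complex

section Commutator

variable {H : Type*} [AddCommGroup H] [Module ℂ H] {A B : H →ₗ.[ℂ] H}

theorem LinearPMap.sub_smul_comp_sub_smul_of_commutator_eq {φ : H}
    (hφA : φ ∈ A.domain) (hφB : φ ∈ B.domain)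
    (h₁ : A ⟨φ, hφA⟩ ∈ B.domain) (h₂ : B ⟨φ, hφB⟩ ∈ A.domain)
    (hrel : A ⟨B ⟨φ, hφB⟩, h₂⟩ - B ⟨A ⟨φ, hφA⟩, h₁⟩ = I • B ⟨φ, hφB⟩) (μ ν : ℂ)
    (hψ : A ⟨φ, hφA⟩ - μ • φ ∈ B.domain) (hξ : B ⟨φ, hφB⟩ - ν • φ ∈ A.domain) :
    B ⟨A ⟨φ, hφA⟩ - μ • φ, hψ⟩ - ν • (A ⟨φ, hφA⟩ - μ • φ) =
      A ⟨B ⟨φ, hφB⟩ - ν • φ, hξ⟩ - (μ + I) • (B ⟨φ, hφB⟩ - ν • φ) - (I * ν) • φ := by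
  have hBψ : B ⟨A ⟨φ, hφA⟩ - μ • φ, hψ⟩ = B ⟨A ⟨φ, hφA⟩, h₁⟩ - μ • B ⟨φ, hφB⟩ := by
    rw [← B.map_smul, ← B.map_sub]; rfl
  have hAξ : A ⟨B ⟨φ, hφB⟩ - ν • φ, hξ⟩ = A ⟨B ⟨φ, hφB⟩, h₂⟩ - ν • A ⟨φ, hφA⟩ := by
    rw [← A.map_smul, ← A.map_sub]; rfl
  rw [hBψ, hAξ, sub_eq_iff_eq_add'.mp hrel]
  module

end Commutator

namespace IsResolventOf

variable {H : Type*} [NormedAddCommGroup H] [InnerProductSpace ℂ H] {A : H →ₗ.[ℂ] H}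
  {μ μ₀ μ₁ : ℂ} {r r₀ r₁ : H →L[ℂ] H}

theorem apply_sub_smul_self (hr : IsResolventOf A 1 μ r) (φ : A.domain) :
    r (A φ - μ • (φ : H)) = φ := by
  simpa using hr.2 φ

theorem apply_sub_smul (hr : IsResolventOf A 1 μ r) (φ : A.domain) (μ' : ℂ) :
    r (A φ - μ' • (φ : H)) = φ + (μ - μ') • r φ := by
  rw [show A φ - μ' • (φ : H) = (A φ - μ • (φ : H)) + (μ - μ') • (φ : H) by module,
    map_add, hr.apply_sub_smul_self, map_smul]

theorem eq_add_smul_mul (hr₀ : IsResolventOf A 1 μ₀ r₀) (hr₁ : IsResolventOf A 1 μ₁ r₁) :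
    r₀ = r₁ + (μ₀ - μ₁) • (r₀ * r₁) := by
  ext ψ
  obtain ⟨hmem, hψ⟩ := hr₁.1 ψ
  rw [one_smul] at hψ
  have h := hr₀.apply_sub_smul ⟨r₁ ψ, hmem⟩ μ₁
  rw [hψ] at h
  simp [h]

theorem apply_apply_sub_smul (hr₀ : IsResolventOf A 1 μ₀ r₀) (hr₁ : IsResolventOf A 1 μ₁ r₁)
    (φ : A.domain) : r₀ (r₁ (A φ - μ₀ • (φ : H))) = r₁ φ := by
  have h := congrArg (· (φ : H)) (hr₀.eq_add_smul_mul hr₁)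
  simp only [add_apply, smul_apply, mul_apply_eq_comp] at h
  rw [hr₁.apply_sub_smul, map_add, map_smul, h]
  module

end IsResolventOf

theorem stmt_16_general {H : Type*} [NormedAddCommGroup H] [InnerProductSpace ℂ H]
    (A B : H →ₗ.[ℂ] H)
    (α β : ℝ)
    (x₀ x₁ y : H →L[ℂ] H)
    (hx₀ : IsResolventOf A 1 ((α : ℂ) * Complex.I) x₀)
    (hx₁ : IsResolventOf A 1 (((α : ℂ) + 1) * Complex.I) x₁)
    (hy : IsResolventOf B 1 ((β : ℂ) * Complex.I) y)
    (D : Set H)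
    (hcomm : ∀ φ ∈ D, ∃ (hφA : φ ∈ A.domain) (hφB : φ ∈ B.domain)
      (h₁ : A ⟨φ, hφA⟩ ∈ B.domain) (h₂ : B ⟨φ, hφB⟩ ∈ A.domain),
      A ⟨B ⟨φ, hφB⟩, h₂⟩ - B ⟨A ⟨φ, hφA⟩, h₁⟩ = Complex.I • B ⟨φ, hφB⟩)
    (hdense : Dense {χ : H | ∃ φ, ∃ _ : φ ∈ D, ∃ (hφA : φ ∈ A.domain)
      (h₂ : A ⟨φ, hφA⟩ - ((α : ℂ) * Complex.I) • φ ∈ B.domain),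
      B ⟨A ⟨φ, hφA⟩ - ((α : ℂ) * Complex.I) • φ, h₂⟩ -
        ((β : ℂ) * Complex.I) • (A ⟨φ, hφA⟩ - ((α : ℂ) * Complex.I) • φ) = χ}) :
    x₀ * y = y * x₁ - (β : ℂ) • (y * (x₀ * (x₁ * y))) := by
  refine ContinuousLinearMap.ext_on (hdense.mono Submodule.subset_span) ?_
  rintro χ ⟨φ, hφD, hφA, hψ, rfl⟩
  obtain ⟨_, hφB, h₁, h₂, hrel⟩ := hcomm φ hφD
  have hξ : B ⟨φ, hφB⟩ - ((β : ℂ) * I) • φ ∈ A.domain :=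
    A.domain.sub_mem h₂ (A.domain.smul_mem _ hφA)
  have hyχ := hy.apply_sub_smul_self ⟨_, hψ⟩
  have hx₁χ := hx₁.apply_sub_smul_self ⟨_, hξ⟩
  have hyξ := hy.apply_sub_smul_self ⟨φ, hφB⟩
  have hx₀ψ := hx₀.apply_sub_smul_self ⟨φ, hφA⟩
  have hx₀x₁ψ := hx₀.apply_apply_sub_smul hx₁ ⟨φ, hφA⟩
  simp only [mul_apply_eq_comp, sub_apply, smul_apply, hyχ, hx₀ψ, hx₀x₁ψ]
  rw [LinearPMap.sub_smul_comp_sub_smul_of_commutator_eq hφA hφB h₁ h₂ hrel _ _ hψ hξ,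
    show (α : ℂ) * I + I = ((α : ℂ) + 1) * I by ring, show I * ((β : ℂ) * I) = -β by
      rw [mul_left_comm, I_mul_I, mul_neg_one]]
  simp only [map_sub, map_smul, hx₁χ, hyξ]
  module

/-- Let `A, B` be self-adjoint, `α < -1`, `β ≠ 0`, with resolvents `x₀ = (A - αi)⁻¹`,
`x₁ = (A - (α+1)i)⁻¹`, `y = (B - βi)⁻¹`.  If `D ⊆ dom(AB) ∩ dom(BA)` satisfies
`ABφ - BAφ = iBφ` on `D` and `D₁ = (B - βi)(A - αi)D` is dense in `H`, then
`x₀ y = y x₁ - β y x₀ x₁ y` holds on all of `H`. -/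
theorem stmt_16 {H : Type*} [NormedAddCommGroup H] [InnerProductSpace ℂ H] [CompleteSpace H]
    (A B : H →ₗ.[ℂ] H) (hA : IsSelfAdjoint A) (hB : IsSelfAdjoint B)
    (α β : ℝ) (hα : α < -1) (hβ : β ≠ 0)
    (x₀ x₁ y : H →L[ℂ] H)
    (hx₀ : IsResolventOf A 1 ((α : ℂ) * Complex.I) x₀)
    (hx₁ : IsResolventOf A 1 (((α : ℂ) + 1) * Complex.I) x₁)
    (hy : IsResolventOf B 1 ((β : ℂ) * Complex.I) y)
    (D : Set H)
    (hcomm : ∀ φ ∈ D, ∃ (hφA : φ ∈ A.domain) (hφB : φ ∈ B.domain)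
      (h₁ : A ⟨φ, hφA⟩ ∈ B.domain) (h₂ : B ⟨φ, hφB⟩ ∈ A.domain),
      A ⟨B ⟨φ, hφB⟩, h₂⟩ - B ⟨A ⟨φ, hφA⟩, h₁⟩ = Complex.I • B ⟨φ, hφB⟩)
    (hdense : Dense {χ : H | ∃ φ, ∃ _ : φ ∈ D, ∃ (hφA : φ ∈ A.domain)
      (h₂ : A ⟨φ, hφA⟩ - ((α : ℂ) * Complex.I) • φ ∈ B.domain),
      B ⟨A ⟨φ, hφA⟩ - ((α : ℂ) * Complex.I) • φ, h₂⟩ -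
        ((β : ℂ) * Complex.I) • (A ⟨φ, hφA⟩ - ((α : ℂ) * Complex.I) • φ) = χ}) :
    x₀ * y = y * x₁ - (β : ℂ) • (y * (x₀ * (x₁ * y))) :=
  stmt_16_general A B α β x₀ x₁ y hx₀ hx₁ hy D hcomm hdense
end

section
/- Let H be a Hilbert space and (E_n, ‖·‖_n), n ≥ 0, a sequence of Hilbert spaces with E₀ = H, E_{n+1} ⊆ E_n, ‖·‖_n ≤ c_n ‖·‖_{n+1} for constants c_n > 0, and E_{n+1} dense in (E_n, ‖·‖_n) for all n. Then E_∞ := ∩_n E_n is dense in H (Mittag-Leffler lemma for a decreasing chain of Hilbert spaces). -/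
/-!
Mittag-Leffler argument, valid for any inverse sequence of complete metric spaces with continuous
bonding maps of dense range: starting from `x ∈ X 0`, pick `u (n+1) ∈ X (n+1)` whose image in
`X n` is so close to `u n` that its images in all the lower spaces `X m` move by less than
`ε / 2 ^ n` (continuity of finitely many composites at `u n`). For each `m` the images of the
`u n` in `X m` then form a Cauchy sequence; the limits are compatible under the bonding maps, so
they form a point of the inverse limit, whose component in `X 0` lies within `2ε` of `x`.
For the inclusions `E (n+1) ↪ E n`, a point of the inverse limit is a vector lying in every `E n`.
-/

open Filter Topology

section MittagLeffler

variable {X : ℕ → Type*} (f : ∀ n, X (n + 1) → X n)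

/-- The composite `f m ∘ f (m + 1) ∘ ⋯ ∘ f (n - 1) : X n → X m`. -/
def bondingMap {m n : ℕ} (h : m ≤ n) : X n → X m :=
  Nat.leRecOn (C := fun k => X k → X m) h (fun g => g ∘ f _) id

def inverseLimit : Set (∀ n, X n) :=
  {y | ∀ n, f n (y (n + 1)) = y n}

variable {f}

theorem bondingMap_self {m : ℕ} (x : X m) : bondingMap f le_rfl x = x := by
  rw [bondingMap, Nat.leRecOn_self, id]

theorem bondingMap_succ {m n : ℕ} (h : m ≤ n) {h' : m ≤ n + 1} (x : X (n + 1)) :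
    bondingMap f h' x = bondingMap f h (f n x) := by
  rw [bondingMap, bondingMap, Nat.leRecOn_succ h]; rfl

theorem bondingMap_congr (u : ∀ n, X n) {m n n' : ℕ} (e : n = n') (h : m ≤ n) (h' : m ≤ n') :
    bondingMap f h (u n) = bondingMap f h' (u n') := by
  subst e; rfl

theorem apply_bondingMap {m n : ℕ} (h : m + 1 ≤ n) (x : X n) :
    f m (bondingMap f h x) = bondingMap f (m.le_succ.trans h) x := by
  induction n, h using Nat.le_induction with
  | base => rw [bondingMap_self, bondingMap_succ le_rfl, bondingMap_self]
  | succ n hn ih => rw [bondingMap_succ hn, ih, ← bondingMap_succ]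

theorem continuous_bondingMap [∀ n, TopologicalSpace (X n)] (hf : ∀ n, Continuous (f n))
    {m n : ℕ} (h : m ≤ n) : Continuous (bondingMap f h) := by
  induction n, h using Nat.le_induction with
  | base => exact continuous_id.congr fun x => (bondingMap_self x).symm
  | succ n hn ih => exact (ih.comp (hf n)).congr fun x => (bondingMap_succ hn x).symm

variable [∀ n, MetricSpace (X n)]

theorem exists_forall_dist_bondingMap_lt (hf : ∀ n, Continuous (f n))
    (hd : ∀ n, DenseRange (f n)) {n : ℕ} (z : X n) {δ : ℝ} (hδ : 0 < δ) :
    ∃ y : X (n + 1), ∀ m (h : m ≤ n), dist (bondingMap f h z) (bondingMap f h (f n y)) < δ := by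
  have hnear : ∀ᶠ w in 𝓝 z, ∀ m ∈ Finset.range (n + 1), ∀ h : m ≤ n,
      dist (bondingMap f h z) (bondingMap f h w) < δ := by
    refine (Finset.eventually_all _).2 fun m hm => ?_
    have h : m ≤ n := Nat.lt_succ_iff.1 (Finset.mem_range.1 hm)
    filter_upwards [(continuous_bondingMap hf h).continuousAt.eventually (Metric.ball_mem_nhds _ hδ)]
      with w hw _
    exact dist_comm (bondingMap f h w) _ ▸ hw
  obtain ⟨y, hy⟩ := (hd n).mem_nhds hnear
  exact ⟨y, fun m h => hy m (Finset.mem_range.2 (Nat.lt_succ_of_le h)) h⟩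

theorem exists_mem_inverseLimit_dist_le [∀ n, CompleteSpace (X n)] (hf : ∀ n, Continuous (f n))
    {u : ∀ n, X n} {C : ℝ}
    (hu : ∀ m n (h : m ≤ n), dist (bondingMap f h (u n)) (bondingMap f h (f n (u (n + 1))))
      ≤ C * (1 / 2) ^ n) :
    ∃ y ∈ inverseLimit f, dist (u 0) (y 0) ≤ 2 * C := by
  set v : ∀ m, ℕ → X m := fun m k => bondingMap f (m.le_add_right k) (u (m + k))
  have hv : ∀ m k, dist (v m k) (v m (k + 1)) ≤ C * (1 / 2) ^ m * (1 / 2) ^ k := fun m k => by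
    rw [mul_assoc, ← pow_add]
    show dist (bondingMap f _ (u (m + k))) (bondingMap f _ (u (m + k + 1))) ≤ _
    rw [bondingMap_succ (m.le_add_right k)]
    exact hu m (m + k) _
  choose Y hY using fun m => cauchySeq_tendsto_of_complete
    (cauchySeq_of_le_geometric _ _ (by norm_num) (hv m))
  refine ⟨Y, fun m => tendsto_nhds_unique ?_ ((hY m).comp (tendsto_add_atTop_nat 1)), ?_⟩
  · have hshift : f m ∘ v (m + 1) = v m ∘ (· + 1) := funext fun k => by
      simp only [Function.comp_apply, v, apply_bondingMap]
      exact bondingMap_congr u (by omega) _ _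
    exact hshift ▸ ((hf m).tendsto _).comp (hY (m + 1))
  · have h0 := dist_le_of_le_geometric_of_tendsto₀ _ _ (by norm_num) (hv 0) (hY 0)
    rw [show v 0 0 = u 0 from bondingMap_self _] at h0
    exact h0.trans_eq (by ring)

theorem dense_image_inverseLimit [∀ n, CompleteSpace (X n)] (hf : ∀ n, Continuous (f n))
    (hd : ∀ n, DenseRange (f n)) : Dense ((fun y => y 0) '' inverseLimit f) := by
  refine Metric.dense_iff.2 fun x r hr => ?_
  choose g hg using fun n (z : X n) =>
    exists_forall_dist_bondingMap_lt hf hd z (by positivity : 0 < r / 4 * (1 / 2) ^ n)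
  obtain ⟨y, hy, hxy⟩ : ∃ y ∈ inverseLimit f, dist x (y 0) ≤ 2 * (r / 4) :=
    exists_mem_inverseLimit_dist_le (u := fun n => Nat.rec x g n) hf fun m n h => (hg n _ m h).le
  exact ⟨y 0, Metric.mem_ball.2 (by rw [dist_comm]; linarith), y, hy, rfl⟩

end MittagLeffler

theorem stmt_19_general {H : Type*} [NormedAddCommGroup H] [InnerProductSpace ℂ H]
    (E : ℕ → Type*) [∀ n, NormedAddCommGroup (E n)] [∀ n, InnerProductSpace ℂ (E n)]
    [∀ n, CompleteSpace (E n)]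
    (j : ∀ n : ℕ, E (n + 1) →L[ℂ] E n)
    (hj_dense : ∀ n, DenseRange (j n))
    (ι : ∀ n : ℕ, E n →L[ℂ] H)
    (hι0_surj : Function.Surjective (ι 0))
    (hι : ∀ n : ℕ, ι (n + 1) = (ι n).comp (j n)) :
    Dense {x : H | ∀ n : ℕ, x ∈ Set.range (ι n)} := by
  have hdense := dense_image_inverseLimit (fun n => (j n).continuous) hj_dense
  refine (hι0_surj.denseRange.dense_image (ι 0).continuous hdense).mono ?_
  rintro _ ⟨_, ⟨y, hy, rfl⟩, rfl⟩ n
  refine ⟨y n, ?_⟩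
  induction n with
  | zero => rfl
  | succ n ih => rw [hι, ContinuousLinearMap.comp_apply]; exact (congrArg (ι n) (hy n)).trans ih

/-- Mittag-Leffler lemma for a decreasing chain of Hilbert spaces.  Let `H` be a Hilbert
space and `(Eₙ, ‖·‖ₙ)` a sequence of Hilbert spaces with `E₀ = H` (via the isometric
isomorphism `ι 0`), continuous injective inclusions `j n : E_{n+1} ↪ Eₙ` with dense range
(so `E_{n+1} ⊆ Eₙ` with `‖·‖ₙ ≤ cₙ ‖·‖_{n+1}` and `E_{n+1}` dense in `(Eₙ, ‖·‖ₙ)`).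
Then `E_∞ = ∩ₙ Eₙ`, realized in `H` as the set of vectors lying in the range of every
composite inclusion `ι n : Eₙ → H`, is dense in `H`. -/
theorem stmt_19 {H : Type*} [NormedAddCommGroup H] [InnerProductSpace ℂ H] [CompleteSpace H]
    (E : ℕ → Type*) [∀ n, NormedAddCommGroup (E n)] [∀ n, InnerProductSpace ℂ (E n)]
    [∀ n, CompleteSpace (E n)]
    (j : ∀ n : ℕ, E (n + 1) →L[ℂ] E n)
    (hj_inj : ∀ n, Function.Injective (j n))
    (hj_dense : ∀ n, DenseRange (j n))
    (ι : ∀ n : ℕ, E n →L[ℂ] H)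
    (hι0_iso : Isometry (ι 0)) (hι0_surj : Function.Surjective (ι 0))
    (hι : ∀ n : ℕ, ι (n + 1) = (ι n).comp (j n)) :
    Dense {x : H | ∀ n : ℕ, x ∈ Set.range (ι n)} :=
  stmt_19_general E j hj_dense ι hι0_surj hι
end
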